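/- Let η ∈ ℝ, let U ⊆ ℝ² be open, and let u, v : U → ℝ be smooth. Define the 2×2 real matrix-valued functions A and B on U by A = [[η/2, u], [v, −η/2]] and B = [[−η³/2 + (ηv − v_x)u + v·u_x, −η²u − η·u_x − u_xx + 2vu²], [−η²v + η·v_x − v_xx + 2uv², η³/2 − (ηv − v_x)u − v·u_x]]. Then the zero-curvature equation ∂_t A − ∂_x B + A·B − B·A = 0 holds at every point of U if and only if (u, v) satisfies the coupled KdV system u_t = −u_xxx + 6uvu_x, v_t = −v_xxx + 6uvv_x on U. -/

import Mathlib

/-- Partial derivative with respect to the first (space) variable. -/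
noncomputable def px (f : ℝ × ℝ → ℝ) : ℝ × ℝ → ℝ := fun p => fderiv ℝ f p (1, 0)

/-- Partial derivative with respect to the second (time) variable. -/
noncomputable def pt (f : ℝ × ℝ → ℝ) : ℝ × ℝ → ℝ := fun p => fderiv ℝ f p (0, 1)

/-- Entrywise partial `x`-derivative of a matrix-valued function. -/
noncomputable def pxM (M : ℝ × ℝ → Matrix (Fin 2) (Fin 2) ℝ) :
    ℝ × ℝ → Matrix (Fin 2) (Fin 2) ℝ :=
  fun p => Matrix.of fun i j => px (fun q => M q i j) p

/-- Entrywise partial `t`-derivative of a matrix-valued function. -/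
noncomputable def ptM (M : ℝ × ℝ → Matrix (Fin 2) (Fin 2) ℝ) :
    ℝ × ℝ → Matrix (Fin 2) (Fin 2) ℝ :=
  fun p => Matrix.of fun i j => pt (fun q => M q i j) p

lemma px_const (c : ℝ) (p : ℝ × ℝ) : px (fun _ => c) p = 0 := by simp [px]
lemma pt_const (c : ℝ) (p : ℝ × ℝ) : pt (fun _ => c) p = 0 := by simp [pt]

lemma px_add {f g : ℝ × ℝ → ℝ} {p : ℝ × ℝ} (hf : DifferentiableAt ℝ f p)
    (hg : DifferentiableAt ℝ g p) :
    px (fun q => f q + g q) p = px f p + px g p := by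
  simp [px, fderiv_fun_add hf hg]

lemma px_sub {f g : ℝ × ℝ → ℝ} {p : ℝ × ℝ} (hf : DifferentiableAt ℝ f p)
    (hg : DifferentiableAt ℝ g p) :
    px (fun q => f q - g q) p = px f p - px g p := by
  simp [px, fderiv_fun_sub hf hg]

lemma px_neg (f : ℝ × ℝ → ℝ) (p : ℝ × ℝ) :
    px (fun q => -f q) p = -px f p := by
  simp [px, fderiv_neg]

lemma px_mul {f g : ℝ × ℝ → ℝ} {p : ℝ × ℝ} (hf : DifferentiableAt ℝ f p)
    (hg : DifferentiableAt ℝ g p) :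
    px (fun q => f q * g q) p = px f p * g p + f p * px g p := by
  simp [px, fderiv_fun_mul hf hg]; ring

lemma px_const_mul {g : ℝ × ℝ → ℝ} {p : ℝ × ℝ} (c : ℝ) (hg : DifferentiableAt ℝ g p) :
    px (fun q => c * g q) p = c * px g p := by
  simp [px, fderiv_const_mul hg c]

lemma px_sq {f : ℝ × ℝ → ℝ} {p : ℝ × ℝ} (hf : DifferentiableAt ℝ f p) :
    px (fun q => f q ^ 2) p = 2 * f p * px f p := by
  have h : (fun q => f q ^ 2) = fun q => f q * f q := by funext q; ring
  rw [h, px_mul hf hf]; ring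

lemma contDiffAt_px {f : ℝ × ℝ → ℝ} {p : ℝ × ℝ} (hf : ContDiffAt ℝ (⊤ : ℕ∞) f p) :
    ContDiffAt ℝ (⊤ : ℕ∞) (px f) p := by
  have h := hf.fderiv_right (m := (⊤ : ℕ∞)) (by simp)
  exact h.clm_apply contDiffAt_const

lemma matrix_eq_zero_iff (M : Matrix (Fin 2) (Fin 2) ℝ) :
    M = 0 ↔ ∀ i j, M i j = 0 :=
  ⟨fun h i j => by rw [h]; rfl, fun h => by ext i j; simpa using h i j⟩

/-- The zero-curvature equation `A_t - B_x + AB - BA = 0` for the stated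
`sl(2,ℝ)`-valued linear problem holds if and only if `(u, v)` solves the
coupled KdV system. -/
theorem coupledKdV_zero_curvature (η : ℝ) (U : Set (ℝ × ℝ)) (hU : IsOpen U)
    (u v : ℝ × ℝ → ℝ) (hu : ContDiffOn ℝ (⊤ : ℕ∞) u U) (hv : ContDiffOn ℝ (⊤ : ℕ∞) v U) :
    (∀ p ∈ U,
      ptM (fun q => !![η / 2, u q; v q, -η / 2]) p
        - pxM (fun q =>
            !![-η ^ 3 / 2 + (η * v q - px v q) * u q + v q * px u q,
                -η ^ 2 * u q - η * px u q - px (px u) q + 2 * v q * u q ^ 2;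
              -η ^ 2 * v q + η * px v q - px (px v) q + 2 * u q * v q ^ 2,
                η ^ 3 / 2 - (η * v q - px v q) * u q - v q * px u q]) p
        + !![η / 2, u p; v p, -η / 2]
          * !![-η ^ 3 / 2 + (η * v p - px v p) * u p + v p * px u p,
                -η ^ 2 * u p - η * px u p - px (px u) p + 2 * v p * u p ^ 2;
              -η ^ 2 * v p + η * px v p - px (px v) p + 2 * u p * v p ^ 2,
                η ^ 3 / 2 - (η * v p - px v p) * u p - v p * px u p]
        - !![-η ^ 3 / 2 + (η * v p - px v p) * u p + v p * px u p,
                -η ^ 2 * u p - η * px u p - px (px u) p + 2 * v p * u p ^ 2;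
              -η ^ 2 * v p + η * px v p - px (px v) p + 2 * u p * v p ^ 2,
                η ^ 3 / 2 - (η * v p - px v p) * u p - v p * px u p]
          * !![η / 2, u p; v p, -η / 2]
        = 0) ↔
    (∀ p ∈ U,
      pt u p = -(px (px (px u)) p) + 6 * u p * v p * px u p ∧
      pt v p = -(px (px (px v)) p) + 6 * u p * v p * px v p) := by
  have key : ∀ p ∈ U,
      (ptM (fun q => !![η / 2, u q; v q, -η / 2]) p
        - pxM (fun q =>
            !![-η ^ 3 / 2 + (η * v q - px v q) * u q + v q * px u q,
                -η ^ 2 * u q - η * px u q - px (px u) q + 2 * v q * u q ^ 2;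
              -η ^ 2 * v q + η * px v q - px (px v) q + 2 * u q * v q ^ 2,
                η ^ 3 / 2 - (η * v q - px v q) * u q - v q * px u q]) p
        + !![η / 2, u p; v p, -η / 2]
          * !![-η ^ 3 / 2 + (η * v p - px v p) * u p + v p * px u p,
                -η ^ 2 * u p - η * px u p - px (px u) p + 2 * v p * u p ^ 2;
              -η ^ 2 * v p + η * px v p - px (px v) p + 2 * u p * v p ^ 2,
                η ^ 3 / 2 - (η * v p - px v p) * u p - v p * px u p]
        - !![-η ^ 3 / 2 + (η * v p - px v p) * u p + v p * px u p,
                -η ^ 2 * u p - η * px u p - px (px u) p + 2 * v p * u p ^ 2;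
              -η ^ 2 * v p + η * px v p - px (px v) p + 2 * u p * v p ^ 2,
                η ^ 3 / 2 - (η * v p - px v p) * u p - v p * px u p]
          * !![η / 2, u p; v p, -η / 2]
        = 0) ↔
      (pt u p = -(px (px (px u)) p) + 6 * u p * v p * px u p ∧
       pt v p = -(px (px (px v)) p) + 6 * u p * v p * px v p) := by
    intro p hp
    have hu' : ContDiffAt ℝ (⊤ : ℕ∞) u p := hu.contDiffAt (hU.mem_nhds hp)
    have hv' : ContDiffAt ℝ (⊤ : ℕ∞) v p := hv.contDiffAt (hU.mem_nhds hp)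
    have hdu : DifferentiableAt ℝ u p := hu'.differentiableAt (by simp)
    have hdv : DifferentiableAt ℝ v p := hv'.differentiableAt (by simp)
    have hdux : DifferentiableAt ℝ (px u) p := (contDiffAt_px hu').differentiableAt (by simp)
    have hdvx : DifferentiableAt ℝ (px v) p := (contDiffAt_px hv').differentiableAt (by simp)
    have hduxx : DifferentiableAt ℝ (px (px u)) p :=
      (contDiffAt_px (contDiffAt_px hu')).differentiableAt (by simp)
    have hdvxx : DifferentiableAt ℝ (px (px v)) p :=
      (contDiffAt_px (contDiffAt_px hv')).differentiableAt (by simp)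
    have hx00 : px (fun q => -η ^ 3 / 2 + (η * v q - px v q) * u q + v q * px u q) p
        = (η * px v p - px (px v) p) * u p + (η * v p - px v p) * px u p
          + px v p * px u p + v p * px (px u) p := by
      rw [px_add (by fun_prop) (by fun_prop), px_add (by fun_prop) (by fun_prop),
        px_mul (by fun_prop) hdu, px_mul hdv hdux,
        px_sub (by fun_prop) hdvx, px_const_mul η hdv, px_const (-η ^ 3 / 2)]
      ring
    have hx11 : px (fun q => η ^ 3 / 2 - (η * v q - px v q) * u q - v q * px u q) p
        = -((η * px v p - px (px v) p) * u p) - (η * v p - px v p) * px u p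
          - px v p * px u p - v p * px (px u) p := by
      rw [px_sub (by fun_prop) (by fun_prop), px_sub (by fun_prop) (by fun_prop),
        px_mul (by fun_prop) hdu, px_mul hdv hdux,
        px_sub (by fun_prop) hdvx, px_const_mul η hdv, px_const (η ^ 3 / 2)]
      ring
    have hx01 : px (fun q => -η ^ 2 * u q - η * px u q - px (px u) q + 2 * v q * u q ^ 2) p
        = -η ^ 2 * px u p - η * px (px u) p - px (px (px u)) p
          + 2 * px v p * u p ^ 2 + 4 * v p * u p * px u p := by
      have e : (fun q => -η ^ 2 * u q - η * px u q - px (px u) q + 2 * v q * u q ^ 2)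
          = fun q => (-η ^ 2) * u q - η * px u q - px (px u) q + (2 * v q) * u q ^ 2 := by
        funext q; ring
      rw [e, px_add (by fun_prop) (by fun_prop), px_sub (by fun_prop) hduxx,
        px_sub (by fun_prop) (by fun_prop), px_const_mul (-η ^ 2) hdu,
        px_const_mul η hdux, px_mul (by fun_prop) (by fun_prop),
        px_const_mul 2 hdv, px_sq hdu]
      ring
    have hx10 : px (fun q => -η ^ 2 * v q + η * px v q - px (px v) q + 2 * u q * v q ^ 2) p
        = -η ^ 2 * px v p + η * px (px v) p - px (px (px v)) p
          + 2 * px u p * v p ^ 2 + 4 * u p * v p * px v p := by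
      have e : (fun q => -η ^ 2 * v q + η * px v q - px (px v) q + 2 * u q * v q ^ 2)
          = fun q => ((-η ^ 2) * v q + η * px v q) - px (px v) q + (2 * u q) * v q ^ 2 := by
        funext q; ring
      rw [e, px_add (by fun_prop) (by fun_prop), px_sub (by fun_prop) hdvxx,
        px_add (by fun_prop) (by fun_prop), px_const_mul (-η ^ 2) hdv,
        px_const_mul η hdvx, px_mul (by fun_prop) (by fun_prop),
        px_const_mul 2 hdu, px_sq hdv]
      ring
    rw [matrix_eq_zero_iff]
    simp only [Fin.forall_fin_two, ptM, pxM, Matrix.sub_apply, Matrix.add_apply,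
      Matrix.mul_apply, Fin.sum_univ_two, Matrix.of_apply, Matrix.cons_val',
      Matrix.cons_val_zero, Matrix.cons_val_one, Matrix.head_cons, Matrix.head_fin_const,
      Matrix.empty_val', Matrix.cons_val_fin_one, Matrix.zero_apply,
      hx00, hx01, hx10, hx11, pt_const]
    constructor
    · rintro ⟨⟨-, h01⟩, h10, -⟩
      exact ⟨by linear_combination h01, by linear_combination h10⟩
    · rintro ⟨h1, h2⟩
      exact ⟨⟨by ring, by linear_combination h1⟩, by linear_combination h2, by ring⟩
  constructor
  · intro h p hp; exact (key p hp).mp (h p hp)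
  · intro h p hp; exact (key p hp).mpr (h p hp)
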